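/- arXiv:1708.00075 — 3 statements merged into one kernel-verified Lean document; each statement's English description precedes it below -/
import Mathlib

section
/- Let K = [−1,1] ⊆ ℝ and let 0 < η ≤ 1. Define f₊(y) = y and f₋(y) = −y. Then for every x ∈ [−1,1], at least one of |∇_{K,η} f₊(x)| = 1 or |∇_{K,η} f₋(x)| = 1 holds. -/
open RealInnerProductSpace

/- Euclidean (nearest-point) projection onto a set `K`.  For a nonempty closed
convex set in a complete inner product space this is the usual orthogonal
projection onto `K`. -/
open Classical in
noncomputable def projOn {E : Type*} [NormedAddCommGroup E] [InnerProductSpace ℝ E]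
    (K : Set E) (u : E) : E :=
  if h : ∃ v, v ∈ K ∧ ∀ w ∈ K, ‖u - v‖ ≤ ‖u - w‖ then h.choose else u

/- The `(K, η)`-projected gradient of `f` at `x`:
`∇_{K,η} f(x) = (1/η) (x − Π_K[x − η ∇f(x)])`. -/
noncomputable def projGrad {E : Type*} [NormedAddCommGroup E] [InnerProductSpace ℝ E]
    [CompleteSpace E] (K : Set E) (η : ℝ) (f : E → ℝ) (x : E) : E :=
  (1 / η) • (x - projOn K (x - η • gradient f x))

/-! If the gradient step `x - η ∇f(x)` stays in `K`, the projection is inactive and the projected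
gradient is the gradient itself, here `±1`. Since `η ≤ 1`, the step `x - η` stays in `[-1, 1]` when
`x ≥ 0`, and the step `x + η` does when `x ≤ 0`. -/

theorem projOn_eq_self {E : Type*} [NormedAddCommGroup E] [InnerProductSpace ℝ E]
    {K : Set E} {u : E} (hu : u ∈ K) : projOn K u = u := by
  have hex : ∃ v, v ∈ K ∧ ∀ w ∈ K, ‖u - v‖ ≤ ‖u - w‖ := ⟨u, hu, fun w _ => by simp⟩
  rw [projOn, dif_pos hex]
  have hdist : ‖u - hex.choose‖ ≤ 0 := by simpa using hex.choose_spec.2 u hu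
  exact (sub_eq_zero.mp (norm_le_zero_iff.mp hdist)).symm

theorem projGrad_eq_gradient {E : Type*} [NormedAddCommGroup E] [InnerProductSpace ℝ E]
    [CompleteSpace E] {K : Set E} {η : ℝ} (hη : η ≠ 0) {f : E → ℝ} {x : E}
    (hstep : x - η • gradient f x ∈ K) : projGrad K η f x = gradient f x := by
  rw [projGrad, projOn_eq_self hstep, sub_sub_cancel, smul_smul, one_div,
    inv_mul_cancel₀ hη, one_smul]

theorem gradient_fun_id_real (x : ℝ) : gradient (fun y : ℝ => y) x = 1 := by
  rw [gradient_eq_deriv', deriv_id'']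

theorem gradient_fun_neg_real (x : ℝ) : gradient (fun y : ℝ => -y) x = -1 := by
  rw [gradient_eq_deriv', deriv_neg'']

/-- On `K = [−1,1] ⊆ ℝ` with `0 < η ≤ 1`, for `f₊(y) = y` and
`f₋(y) = −y`, every `x ∈ [−1,1]` has `|∇_{K,η} f₊(x)| = 1` or
`|∇_{K,η} f₋(x)| = 1`. -/
theorem projGrad_pm_one (η : ℝ) (hη0 : 0 < η) (hη1 : η ≤ 1)
    (x : ℝ) (hx : x ∈ Set.Icc (-1 : ℝ) 1) :
    |projGrad (Set.Icc (-1 : ℝ) 1) η (fun y => y) x| = 1 ∨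
    |projGrad (Set.Icc (-1 : ℝ) 1) η (fun y => -y) x| = 1 := by
  obtain ⟨hx₁, hx₂⟩ := hx
  rcases le_total 0 x with hx₀ | hx₀
  · left
    have hstep : x - η • gradient (fun y : ℝ => y) x ∈ Set.Icc (-1 : ℝ) 1 := by
      rw [gradient_fun_id_real, smul_eq_mul, mul_one]
      constructor <;> linarith
    rw [projGrad_eq_gradient hη0.ne' hstep, gradient_fun_id_real, abs_one]
  · right
    have hstep : x - η • gradient (fun y : ℝ => -y) x ∈ Set.Icc (-1 : ℝ) 1 := by
      rw [gradient_fun_neg_real, smul_eq_mul, mul_neg_one, sub_neg_eq_add]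
      constructor <;> linarith
    rw [projGrad_eq_gradient hη0.ne' hstep, gradient_fun_neg_real, abs_neg, abs_one]
end

section
/- Let K ⊆ ℝⁿ be a closed convex nonempty set, let η > 0, let f : ℝⁿ → ℝ be differentiable, and let x ∈ K. Then ⟨∇f(x), ∇_{K,η} f(x)⟩ ≥ ‖∇_{K,η} f(x)‖². -/
open RealInnerProductSpace

open Classical in
lemma projOn_spec {E : Type*} [NormedAddCommGroup E] [InnerProductSpace ℝ E]
    [CompleteSpace E] (K : Set E) (hKcl : IsClosed K) (hKconv : Convex ℝ K)
    (hKne : K.Nonempty) (u : E) :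
    projOn K u ∈ K ∧ ∀ w ∈ K, ‖u - projOn K u‖ ≤ ‖u - w‖ := by
  obtain ⟨v, hvK, hv⟩ := exists_norm_eq_iInf_of_complete_convex hKne
    (hKcl.isComplete) hKconv u
  have hex : ∃ v, v ∈ K ∧ ∀ w ∈ K, ‖u - v‖ ≤ ‖u - w‖ := by
    refine ⟨v, hvK, fun w hw => ?_⟩
    rw [hv]
    exact ciInf_le ⟨0, Set.forall_mem_range.2 fun _ => norm_nonneg _⟩ (⟨w, hw⟩ : K)
  rw [projOn, dif_pos hex]
  exact hex.choose_spec

/-- For a closed convex nonempty `K`, `η > 0`, differentiable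
`f` and `x ∈ K`: `⟨∇f(x), ∇_{K,η} f(x)⟩ ≥ ‖∇_{K,η} f(x)‖²`. -/
theorem inner_gradient_projGrad_ge {n : ℕ} (K : Set (EuclideanSpace ℝ (Fin n)))
    (hKcl : IsClosed K) (hKconv : Convex ℝ K) (hKne : K.Nonempty)
    (η : ℝ) (hη : 0 < η)
    (f : EuclideanSpace ℝ (Fin n) → ℝ) (hf : Differentiable ℝ f)
    (x : EuclideanSpace ℝ (Fin n)) (hx : x ∈ K) :
    ⟪gradient f x, projGrad K η f x⟫ ≥ ‖projGrad K η f x‖ ^ 2 := by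
  set g := gradient f x
  set u := x - η • g with hu
  set p := projOn K u with hp
  obtain ⟨hpK, hpmin⟩ := projOn_spec K hKcl hKconv hKne u
  -- p minimizes, hence norm = iInf, hence variational inequality
  have hiInf : ‖u - p‖ = ⨅ w : K, ‖u - w‖ := by
    have : Nonempty K := hKne.to_subtype
    refine le_antisymm (le_ciInf fun w => hpmin w w.2) ?_
    exact ciInf_le ⟨0, Set.forall_mem_range.2 fun _ => norm_nonneg _⟩ (⟨p, hpK⟩ : K)
  have hvar : ⟪u - p, x - p⟫ ≤ 0 :=
    (norm_eq_iInf_iff_real_inner_le_zero hKconv hpK).mp hiInf x hx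
  have key : ⟪x - p, x - p⟫ ≤ η * ⟪g, x - p⟫ := by
    have : ⟪x - η • g - p, x - p⟫ ≤ 0 := hvar
    rw [sub_right_comm, inner_sub_left, real_inner_smul_left] at this
    linarith
  have hnorm : ‖x - p‖ ^ 2 ≤ η * ⟪g, x - p⟫ := by
    rwa [← real_inner_self_eq_norm_sq]
  have hpg : projGrad K η f x = (1 / η) • (x - p) := rfl
  rw [hpg, norm_smul, real_inner_smul_right, mul_pow]
  have hηn : ‖(1:ℝ)/η‖ = 1/η := by
    rw [Real.norm_eq_abs, abs_of_pos (by positivity)]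
  rw [hηn]
  rw [ge_iff_le, div_pow, one_pow]
  have h3 := mul_le_mul_of_nonneg_left hnorm (by positivity : (0:ℝ) ≤ 1/η^2)
  have h4 : 1/η^2 * (η * ⟪g, x - p⟫) = 1/η * ⟪g, x - p⟫ := by
    field_simp
  linarith
end

section
/- Let f_1, …, f_T : ℝⁿ → ℝ be differentiable, bounded in absolute value by M, and β-smooth (with f_t ≡ 0 for t ≤ 0), and let 1 ≤ w ≤ T. On a probability space, let random iterates be generated by x_1 = 0 and x_{t+1} = x_t − (1/β) ĝ_t, where each ĝ_t is a square-integrable random vector satisfying E[ĝ_t | x_t] = ∇F_{t,w}(x_t) and E[‖ĝ_t − ∇F_{t,w}(x_t)‖² | x_t] ≤ σ²/w almost surely (as arises from averaging w independent unbiased gradient estimates of variance σ² each). Then the expected w-local regret (with K = ℝⁿ, so the projected gradient equals the gradient) satisfies E[ Σ_{t=1}^T ‖∇F_{t,w}(x_t)‖² ] ≤ (8βM + σ²) · T / w. -/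
open RealInnerProductSpace

/- The sliding-window time average `F_{t,w}(x) = (1/w) ∑_{i=0}^{w-1} f_{t-i}(x)`,
where natural-number subtraction together with `f 0 = 0` encodes the convention
that `f_t ≡ 0` for `t ≤ 0`. -/
noncomputable def Favg {E : Type*} (f : ℕ → E → ℝ) (w t : ℕ) (x : E) : ℝ :=
  (1 / (w : ℝ)) * ∑ i ∈ Finset.range w, f (t - i) x

open MeasureTheory

/-!
By the descent lemma, one step of size `1/β` on the `β`-smooth function `F_t = F_{t,w}`
gives, for every sample path,
`‖∇F_t(x_t)‖² ≤ 2β (F_t(x_t) − F_t(x_{t+1})) + ‖ĝ_t − ∇F_t(x_t)‖²`.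
Summed over `t`, the function values telescope up to the drift
`F_{t+1} − F_t = (f_{t+1} − f_{t+1−w}) / w ≤ 2M / w`, so the path sum is at most
`2β (2M + 2MT/w) + Σ_t ‖ĝ_t − ∇F_t(x_t)‖²`; taking expectations, each error term
contributes at most `σ²/w`.
-/

open Finset

section Smooth

variable {E : Type*} [NormedAddCommGroup E] [InnerProductSpace ℝ E] [CompleteSpace E]
  {φ : E → ℝ} {L : ℝ}

theorem le_add_inner_gradient_add_sq (hφ : Differentiable ℝ φ)
    (hL : ∀ a b, ‖gradient φ a - gradient φ b‖ ≤ L * ‖a - b‖) (x y : E) :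
    φ y ≤ φ x + ⟪gradient φ x, y - x⟫ + L / 2 * ‖y - x‖ ^ 2 := by
  set v := y - x
  -- `φ` on the segment from `x` to `y` minus its quadratic upper model: antitone on `[0, 1]`.
  let ψ : ℝ → ℝ := fun s =>
    φ (x + s • v) - s * ⟪gradient φ x, v⟫ - L / 2 * s ^ 2 * ‖v‖ ^ 2
  have hψ : ∀ s, HasDerivAt ψ
      (⟪gradient φ (x + s • v) - gradient φ x, v⟫ - L * s * ‖v‖ ^ 2) s := by
    intro s
    have hline : HasDerivAt (fun s : ℝ => x + s • v) v s := by
      simpa using ((hasDerivAt_id s).smul_const v).const_add x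
    have := (((hφ _).hasFDerivAt.comp_hasDerivAt s hline).sub
      ((hasDerivAt_id s).mul_const ⟪gradient φ x, v⟫)).sub
      (((hasDerivAt_pow 2 s).const_mul (L / 2)).mul_const (‖v‖ ^ 2))
    refine this.congr_deriv ?_
    simp only [inner_sub_left, inner_gradient_left, Nat.cast_ofNat, pow_one,
      Nat.add_one_sub_one]
    ring
  have hψ_nonpos : ∀ s ∈ interior (Set.Icc (0 : ℝ) 1), deriv ψ s ≤ 0 := by
    intro s hs
    rw [interior_Icc] at hs
    rw [(hψ s).deriv, sub_nonpos]
    calc ⟪gradient φ (x + s • v) - gradient φ x, v⟫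
        ≤ ‖gradient φ (x + s • v) - gradient φ x‖ * ‖v‖ := real_inner_le_norm _ _
      _ ≤ L * ‖s • v‖ * ‖v‖ := by
          gcongr
          simpa using hL (x + s • v) x
      _ = L * s * ‖v‖ ^ 2 := by rw [norm_smul, Real.norm_of_nonneg hs.1.le]; ring
  have hanti : AntitoneOn ψ (Set.Icc 0 1) :=
    antitoneOn_of_deriv_nonpos (convex_Icc 0 1)
      (HasDerivAt.continuousOn fun s _ => hψ s)
      (fun s _ => (hψ s).differentiableAt.differentiableWithinAt) hψ_nonpos
  have h0 : ψ 0 = φ x := by simp [ψ]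
  have h1 : ψ 1 = φ y - ⟪gradient φ x, v⟫ - L / 2 * ‖v‖ ^ 2 := by simp [ψ, v]
  linarith [hanti (by simp) (by simp) zero_le_one]

theorem sq_norm_gradient_le_of_step (hφ : Differentiable ℝ φ)
    (hL : ∀ a b, ‖gradient φ a - gradient φ b‖ ≤ L * ‖a - b‖) (hL0 : 0 < L) (x g : E) :
    ‖gradient φ x‖ ^ 2
      ≤ 2 * L * (φ x - φ (x - (1 / L) • g)) + ‖g - gradient φ x‖ ^ 2 := by
  have h := le_add_inner_gradient_add_sq hφ hL x (x - (1 / L) • g)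
  rw [sub_sub_cancel_left, inner_neg_right, real_inner_smul_right, norm_neg, norm_smul,
    Real.norm_of_nonneg (by positivity), mul_pow] at h
  field_simp at h
  rw [norm_sub_sq_real, real_inner_comm]
  linarith

end Smooth

theorem sum_Icc_sub_le_of_drift_le {α : Type*} (F : ℕ → α → ℝ) (x : ℕ → α) {M δ : ℝ}
    (hF : ∀ t z, |F t z| ≤ M) (hdrift : ∀ t z, F (t + 1) z - F t z ≤ δ) (T : ℕ) :
    ∑ t ∈ Icc 1 T, (F t (x t) - F t (x (t + 1))) ≤ 2 * M + T * δ := by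
  suffices h : ∑ t ∈ Icc 1 T, (F t (x t) - F t (x (t + 1)))
      ≤ F 1 (x 1) - F (T + 1) (x (T + 1)) + T * δ by
    linarith [(abs_le.1 (hF 1 (x 1))).2, (abs_le.1 (hF (T + 1) (x (T + 1)))).1]
  induction T with
  | zero => simp
  | succ T ih =>
    rw [sum_Icc_succ_top (by omega), Nat.cast_succ]
    linarith [hdrift (T + 1) (x (T + 1 + 1))]

section GradientDescent

variable {E : Type*} [NormedAddCommGroup E] [InnerProductSpace ℝ E] [CompleteSpace E]
  {F : ℕ → E → ℝ} {L M δ : ℝ}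

theorem sum_sq_norm_gradient_le_of_gradient_steps (hL0 : 0 < L)
    (hdiff : ∀ t, Differentiable ℝ (F t))
    (hsmooth : ∀ t a b, ‖gradient (F t) a - gradient (F t) b‖ ≤ L * ‖a - b‖)
    (hbdd : ∀ t z, |F t z| ≤ M) (hdrift : ∀ t z, F (t + 1) z - F t z ≤ δ)
    {x g : ℕ → E} (hrec : ∀ t, 1 ≤ t → x (t + 1) = x t - (1 / L) • g t) (T : ℕ) :
    ∑ t ∈ Icc 1 T, ‖gradient (F t) (x t)‖ ^ 2
      ≤ 2 * L * (2 * M + T * δ) + ∑ t ∈ Icc 1 T, ‖g t - gradient (F t) (x t)‖ ^ 2 := by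
  have hstep : ∀ t ∈ Icc 1 T, ‖gradient (F t) (x t)‖ ^ 2
      ≤ 2 * L * (F t (x t) - F t (x (t + 1))) + ‖g t - gradient (F t) (x t)‖ ^ 2 :=
    fun t ht => hrec t (mem_Icc.1 ht).1 ▸
      sq_norm_gradient_le_of_step (hdiff t) (hsmooth t) hL0 (x t) (g t)
  calc ∑ t ∈ Icc 1 T, ‖gradient (F t) (x t)‖ ^ 2
      ≤ 2 * L * ∑ t ∈ Icc 1 T, (F t (x t) - F t (x (t + 1)))
        + ∑ t ∈ Icc 1 T, ‖g t - gradient (F t) (x t)‖ ^ 2 := by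
        rw [mul_sum, ← sum_add_distrib]
        exact sum_le_sum hstep
    _ ≤ _ := by
        gcongr
        exact sum_Icc_sub_le_of_drift_le F x hbdd hdrift T

theorem integral_sum_sq_norm_gradient_le_of_gradient_steps {Ω : Type*} [MeasurableSpace Ω]
    {μ : Measure Ω} [IsProbabilityMeasure μ] (hL0 : 0 < L)
    (hdiff : ∀ t, Differentiable ℝ (F t))
    (hsmooth : ∀ t a b, ‖gradient (F t) a - gradient (F t) b‖ ≤ L * ‖a - b‖)
    (hbdd : ∀ t z, |F t z| ≤ M) (hdrift : ∀ t z, F (t + 1) z - F t z ≤ δ)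
    {x g : ℕ → Ω → E} (hrec : ∀ t, 1 ≤ t → ∀ ω, x (t + 1) ω = x t ω - (1 / L) • g t ω)
    {T : ℕ} {v : ℝ}
    (hint : ∀ t ∈ Icc 1 T, Integrable (fun ω => ‖g t ω - gradient (F t) (x t ω)‖ ^ 2) μ)
    (hvar : ∀ t ∈ Icc 1 T, ∫ ω, ‖g t ω - gradient (F t) (x t ω)‖ ^ 2 ∂μ ≤ v) :
    ∫ ω, (∑ t ∈ Icc 1 T, ‖gradient (F t) (x t ω)‖ ^ 2) ∂μ
      ≤ 2 * L * (2 * M + T * δ) + T * v := by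
  have hint_sum := integrable_finsetSum _ hint
  calc ∫ ω, (∑ t ∈ Icc 1 T, ‖gradient (F t) (x t ω)‖ ^ 2) ∂μ
      ≤ ∫ ω, (2 * L * (2 * M + T * δ)
          + ∑ t ∈ Icc 1 T, ‖g t ω - gradient (F t) (x t ω)‖ ^ 2) ∂μ :=
        integral_mono_of_nonneg (.of_forall fun ω => by positivity)
          ((integrable_const _).add hint_sum) (.of_forall fun ω =>
            sum_sq_norm_gradient_le_of_gradient_steps hL0 hdiff hsmooth hbdd hdrift
              (fun t ht => hrec t ht ω) T)
    _ = 2 * L * (2 * M + T * δ)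
          + ∑ t ∈ Icc 1 T, ∫ ω, ‖g t ω - gradient (F t) (x t ω)‖ ^ 2 ∂μ := by
        rw [integral_add (integrable_const _) hint_sum, integral_finsetSum _ hint]
        simp
    _ ≤ 2 * L * (2 * M + T * δ) + T * v := by
        grw [sum_le_sum hvar]
        simp

end GradientDescent

section Stochastic

variable {Ω E : Type*} [NormedAddCommGroup E]

theorem LipschitzWith.comp_memLp_of_isFiniteMeasure {F : Type*} [NormedAddCommGroup F]
    [MeasurableSpace Ω] {μ : Measure Ω} [IsFiniteMeasure μ] {p : ENNReal} {K : NNReal}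
    {φ : E → F} (hφ : LipschitzWith K φ) {X : Ω → E} (hX : MemLp X p μ) :
    MemLp (fun ω => φ (X ω)) p μ := by
  have hφ0 : LipschitzWith K fun y => φ y - φ 0 := by
    simpa using hφ.sub (LipschitzWith.const (φ 0))
  convert (hφ0.comp_memLp (sub_self _) hX).add (memLp_const (φ 0)) using 1
  ext ω
  simp

theorem integral_le_of_condExp_le_const {m mΩ : MeasurableSpace Ω} {μ : Measure[mΩ] Ω}
    [IsProbabilityMeasure μ] (hm : m ≤ mΩ) {h : Ω → ℝ} {c : ℝ}
    (hc : μ[h | m] ≤ᵐ[μ] fun _ => c) : ∫ ω, h ω ∂μ ≤ c := by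
  rw [← integral_condExp hm]
  simpa using integral_mono_ae integrable_condExp (integrable_const c) hc

theorem memLp_of_eq_sub_smul [NormedSpace ℝ E] [MeasurableSpace Ω] {μ : Measure Ω}
    {p : ENNReal} {x g : ℕ → Ω → E} {c : ℝ} (hx1 : MemLp (x 1) p μ) (hg : ∀ t, MemLp (g t) p μ)
    (hrec : ∀ t, 1 ≤ t → ∀ ω, x (t + 1) ω = x t ω - c • g t ω) :
    ∀ t, 1 ≤ t → MemLp (x t) p μ := by
  intro t ht
  induction t, ht using Nat.le_induction with
  | base => exact hx1
  | succ t ht ih =>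
    rw [show x (t + 1) = fun ω => x t ω - c • g t ω from funext (hrec t ht)]
    exact ih.sub ((hg t).const_smul c)

end Stochastic

section Favg

variable {E : Type*} {f : ℕ → E → ℝ} {w : ℕ}

theorem abs_Favg_le (hw : 1 ≤ w) {M : ℝ} (hbdd : ∀ s z, |f s z| ≤ M) (t : ℕ) (z : E) :
    |Favg f w t z| ≤ M := by
  have hw0 : (0 : ℝ) < w := by exact_mod_cast hw
  rw [Favg, abs_mul, abs_of_pos (by positivity)]
  calc 1 / (w : ℝ) * |∑ i ∈ range w, f (t - i) z|
      ≤ 1 / (w : ℝ) * ∑ _i ∈ range w, M := by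
        gcongr
        exact (abs_sum_le_sum_abs _ _).trans (sum_le_sum fun i _ => hbdd _ z)
    _ = M := by rw [sum_const, card_range, nsmul_eq_mul]; field_simp

theorem Favg_succ_sub (f : ℕ → E → ℝ) (w t : ℕ) (z : E) :
    Favg f w (t + 1) z - Favg f w t z = (1 / (w : ℝ)) * (f (t + 1) z - f (t + 1 - w) z) := by
  rcases w with _ | w
  · simp [Favg]
  rw [Favg, Favg, ← mul_sub, sum_range_succ', sum_range_succ]
  congr 1
  have hshift : ∀ i ∈ range w, f (t + 1 - (i + 1)) z = f (t - i) z := fun i _ => by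
    rw [Nat.add_sub_add_right]
  rw [sum_congr rfl hshift, Nat.sub_zero, Nat.add_sub_add_right]
  ring

theorem Favg_succ_sub_le {M : ℝ} (hbdd : ∀ s z, |f s z| ≤ M) (t : ℕ) (z : E) :
    Favg f w (t + 1) z - Favg f w t z ≤ 2 * M / w := by
  rw [Favg_succ_sub, one_div_mul_eq_div]
  gcongr
  linarith [(abs_le.1 (hbdd (t + 1) z)).2, (abs_le.1 (hbdd (t + 1 - w) z)).1]

variable [NormedAddCommGroup E]

theorem differentiable_Favg [NormedSpace ℝ E] (hf : ∀ s, Differentiable ℝ (f s)) (t : ℕ) :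
    Differentiable ℝ (Favg f w t) :=
  (Differentiable.fun_sum fun i _ => hf (t - i)).const_mul _

variable [InnerProductSpace ℝ E] [CompleteSpace E]

theorem gradient_Favg (hf : ∀ s, Differentiable ℝ (f s)) (t : ℕ) (z : E) :
    gradient (Favg f w t) z = (1 / (w : ℝ)) • ∑ i ∈ range w, gradient (f (t - i)) z := by
  have hsum := Differentiable.fun_sum (u := range w) fun i _ => hf (t - i)
  unfold gradient Favg
  rw [fderiv_const_mul hsum.differentiableAt,
    fderiv_fun_sum fun i _ => (hf (t - i)).differentiableAt, map_smul, map_sum]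

theorem norm_gradient_Favg_sub_le (hw : 1 ≤ w) (hf : ∀ s, Differentiable ℝ (f s)) {β : ℝ}
    (hsmooth : ∀ s a b, ‖gradient (f s) a - gradient (f s) b‖ ≤ β * ‖a - b‖)
    (t : ℕ) (a b : E) :
    ‖gradient (Favg f w t) a - gradient (Favg f w t) b‖ ≤ β * ‖a - b‖ := by
  have hw0 : (0 : ℝ) < w := by exact_mod_cast hw
  rw [gradient_Favg hf, gradient_Favg hf, ← smul_sub, ← sum_sub_distrib, norm_smul,
    Real.norm_of_nonneg (by positivity)]
  calc 1 / (w : ℝ) * ‖∑ i ∈ range w, (gradient (f (t - i)) a - gradient (f (t - i)) b)‖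
      ≤ 1 / (w : ℝ) * ∑ _i ∈ range w, β * ‖a - b‖ := by
        gcongr
        exact (norm_sum_le _ _).trans (sum_le_sum fun i _ => hsmooth _ a b)
    _ = β * ‖a - b‖ := by rw [sum_const, card_range, nsmul_eq_mul]; field_simp

end Favg

theorem stochastic_local_regret_general {n : ℕ}
    (f : ℕ → EuclideanSpace ℝ (Fin n) → ℝ) (T w : ℕ) (hw : 1 ≤ w) (hwT : w ≤ T)
    (M β σ : ℝ) (hβ : 0 < β)
    (hdiff : ∀ t, Differentiable ℝ (f t))
    (hbdd : ∀ t x, |f t x| ≤ M)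
    (hsmooth : ∀ t x y, ‖gradient (f t) x - gradient (f t) y‖ ≤ β * ‖x - y‖)
    {Ω : Type*} [MeasurableSpace Ω] (μ : Measure Ω) [IsProbabilityMeasure μ]
    (x g : ℕ → Ω → EuclideanSpace ℝ (Fin n))
    (hx1 : ∀ ω, x 1 ω = 0)
    (hrec : ∀ t, 1 ≤ t → ∀ ω, x (t + 1) ω = x t ω - (1 / β) • g t ω)
    (hxmeas : ∀ t, Measurable (x t))
    (hgL2 : ∀ t, MemLp (g t) 2 μ)
    (hvar : ∀ t, 1 ≤ t → t ≤ T →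
      μ[(fun ω => ‖g t ω - gradient (Favg f w t) (x t ω)‖ ^ 2) |
          MeasurableSpace.comap (x t) inferInstance] ≤ᵐ[μ]
        fun _ => σ ^ 2 / w) :
    ∫ ω, (∑ t ∈ Finset.Icc 1 T, ‖gradient (Favg f w t) (x t ω)‖ ^ 2) ∂μ ≤
      (8 * β * M + σ ^ 2) * T / w := by
  have hFsmooth := norm_gradient_Favg_sub_le hw hdiff hsmooth
  have hx : ∀ t, 1 ≤ t → MemLp (x t) 2 μ :=
    memLp_of_eq_sub_smul (by simp [funext hx1]) hgL2 hrec
  have hlip : ∀ t, LipschitzWith β.toNNReal (gradient (Favg f w t)) := fun t =>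
    LipschitzWith.of_dist_le' fun a b => by simpa only [dist_eq_norm] using hFsmooth t a b
  have hint : ∀ t ∈ Icc 1 T,
      Integrable (fun ω => ‖g t ω - gradient (Favg f w t) (x t ω)‖ ^ 2) μ := fun t ht =>
    ((hgL2 t).sub ((hlip t).comp_memLp_of_isFiniteMeasure
      (hx t (mem_Icc.1 ht).1))).integrable_norm_pow two_ne_zero
  have hM : 0 ≤ M := (abs_nonneg _).trans (hbdd 0 0)
  have hTw : (1 : ℝ) ≤ T / w :=
    (one_le_div (by exact_mod_cast hw)).2 (by exact_mod_cast hwT)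
  calc ∫ ω, (∑ t ∈ Icc 1 T, ‖gradient (Favg f w t) (x t ω)‖ ^ 2) ∂μ
      ≤ 2 * β * (2 * M + T * (2 * M / w)) + T * (σ ^ 2 / w) :=
        integral_sum_sq_norm_gradient_le_of_gradient_steps hβ (differentiable_Favg hdiff)
          hFsmooth (abs_Favg_le hw hbdd) (Favg_succ_sub_le hbdd) hrec hint fun t ht =>
          integral_le_of_condExp_le_const (hxmeas t).comap_le
            (hvar t (mem_Icc.1 ht).1 (mem_Icc.1 ht).2)
    _ = 4 * β * M + (4 * β * M + σ ^ 2) * (T / w) := by ring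
    _ ≤ 4 * β * M * (T / w) + (4 * β * M + σ ^ 2) * (T / w) := by
        gcongr ?_ + _
        exact le_mul_of_one_le_right (by positivity) hTw
    _ = (8 * β * M + σ ^ 2) * T / w := by ring

/-- Expected local-regret bound for time-smoothed online
gradient descent with stochastic gradient oracles (`K = ℝⁿ`, so the projected
gradient is the gradient):  with `x_1 = 0` and `x_{t+1} = x_t − (1/β) ĝ_t`,
where `E[ĝ_t | x_t] = ∇F_{t,w}(x_t)` and
`E[‖ĝ_t − ∇F_{t,w}(x_t)‖² | x_t] ≤ σ²/w` a.s., the expected `w`-local regret is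
at most `(8βM + σ²) T / w`. -/
theorem stochastic_local_regret {n : ℕ}
    (f : ℕ → EuclideanSpace ℝ (Fin n) → ℝ) (T w : ℕ) (hw : 1 ≤ w) (hwT : w ≤ T)
    (M β σ : ℝ) (hβ : 0 < β)
    (hf0 : f 0 = fun _ => 0)
    (hdiff : ∀ t, Differentiable ℝ (f t))
    (hbdd : ∀ t x, |f t x| ≤ M)
    (hsmooth : ∀ t x y, ‖gradient (f t) x - gradient (f t) y‖ ≤ β * ‖x - y‖)
    {Ω : Type*} [MeasurableSpace Ω] (μ : Measure Ω) [IsProbabilityMeasure μ]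
    (x g : ℕ → Ω → EuclideanSpace ℝ (Fin n))
    (hx1 : ∀ ω, x 1 ω = 0)
    (hrec : ∀ t, 1 ≤ t → ∀ ω, x (t + 1) ω = x t ω - (1 / β) • g t ω)
    (hxmeas : ∀ t, Measurable (x t)) (hgmeas : ∀ t, Measurable (g t))
    (hgL2 : ∀ t, MemLp (g t) 2 μ)
    (hunbiased : ∀ t, 1 ≤ t → t ≤ T →
      μ[g t | MeasurableSpace.comap (x t) inferInstance] =ᵐ[μ]
        fun ω => gradient (Favg f w t) (x t ω))
    (hvar : ∀ t, 1 ≤ t → t ≤ T →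
      μ[(fun ω => ‖g t ω - gradient (Favg f w t) (x t ω)‖ ^ 2) |
          MeasurableSpace.comap (x t) inferInstance] ≤ᵐ[μ]
        fun _ => σ ^ 2 / w) :
    ∫ ω, (∑ t ∈ Finset.Icc 1 T, ‖gradient (Favg f w t) (x t ω)‖ ^ 2) ∂μ ≤
      (8 * β * M + σ ^ 2) * T / w :=
  stochastic_local_regret_general f T w hw hwT M β σ hβ hdiff hbdd hsmooth μ x g hx1 hrec hxmeas
    hgL2 hvar
end
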